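/- Let {x_k} be generated by the LMMSS line-search algorithm (as in Theorem on global convergence): ν, η, ϑ ∈ (0,1); F(x_k) ≠ 0 for all k; d_k solves (J(x_k)ᵀJ(x_k) + λ_k LᵀL)d_k = −J(x_k)ᵀF(x_k) with λ_k = ‖F(x_k)‖²; α_k = 1 if ‖F(x_k + d_k)‖ ≤ ϑ‖F(x_k)‖ and otherwise α_k = η^{m_k} with m_k the smallest non-negative integer m such that φ(x_k + η^m d_k) − φ(x_k) ≤ ν η^m ∇φ(x_k)ᵀd_k, where φ(x) = ½‖F(x)‖²; x_{k+1} = x_k + α_k d_k. Suppose a limit point x* of {x_k} satisfies F(x*) = 0 and the local assumptions hold at x*. Then there exists k₀ such that α_k = 1 and ‖F(x_{k+1})‖ ≤ ϑ‖F(x_k)‖ for all k ≥ k₀, and the sequence {dist(x_k, X*)} converges to 0 quadratically, i.e. dist(x_{k+1}, X*) ≤ c₅·dist(x_k, X*)² for all k ≥ k₀ and dist(x_k, X*) → 0. -/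

import Mathlib

/-!
Near a zero `x*`, the Lipschitz bound and the error bound make `‖F x‖` comparable to
`s = dist(x, X*)`, so the regularization parameter `λ = ‖F x‖²` is of order `s²`. The step `d`
minimizes the regularized merit function `e ↦ ‖F x + J e‖² + λ‖L e‖²`; comparing it with the step
`x̄ - x` to a nearest zero `x̄` and using the completeness condition gives `‖d‖ ≤ c₃ s` and
`‖F x + J d‖ ≤ c₄ s²`, hence `c₂ dist(x + d, X*) ≤ ‖F (x + d)‖ ≤ (c₁c₃² + c₄) s²`. Once an
iterate is close enough to `x*`, this makes the full step pass the test `‖F(x + d)‖ ≤ ϑ‖F x‖`,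
the distances to `X*` at least halve at every step, and the steps, of length at most `c₃ s`, are
summable enough for the iterates never to leave the region where the local assumptions hold.
-/

open Matrix Metric Filter RealInnerProductSpace

/-- The continuous linear map on Euclidean spaces induced by a real matrix. -/
noncomputable def matCLM {m n : ℕ} (A : Matrix (Fin m) (Fin n) ℝ) :
    EuclideanSpace ℝ (Fin n) →L[ℝ] EuclideanSpace ℝ (Fin m) :=
  LinearMap.toContinuousLinearMap (Matrix.toEuclideanLin A)

/-- `c₃ = (1/(c₂√γ))·√(c₁² + c₂²(nL² + c_F²))`, where `nL = ‖L‖` (spectral norm). -/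
noncomputable def lmC3 (c1 c2 cF γ nL : ℝ) : ℝ :=
  (1 / (c2 * Real.sqrt γ)) * Real.sqrt (c1 ^ 2 + c2 ^ 2 * (nL ^ 2 + cF ^ 2))

/-- `c₄ = √(c₁² + c_F²·nL²)`, where `nL = ‖L‖` (spectral norm). -/
noncomputable def lmC4 (c1 cF nL : ℝ) : ℝ :=
  Real.sqrt (c1 ^ 2 + cF ^ 2 * nL ^ 2)

/-- `c₅ = (c₁c₃² + c₄)/c₂`. -/
noncomputable def lmC5 (c1 c2 cF γ nL : ℝ) : ℝ :=
  (c1 * (lmC3 c1 c2 cF γ nL) ^ 2 + lmC4 c1 cF nL) / c2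

open Topology

section MatrixMap

variable {m n p : ℕ}

lemma matCLM_add (A B : Matrix (Fin m) (Fin n) ℝ) (v : EuclideanSpace ℝ (Fin n)) :
    matCLM (A + B) v = matCLM A v + matCLM B v := by
  simp [matCLM]

lemma matCLM_smul (c : ℝ) (A : Matrix (Fin m) (Fin n) ℝ) (v : EuclideanSpace ℝ (Fin n)) :
    matCLM (c • A) v = c • matCLM A v := by
  simp [matCLM]

lemma matCLM_mul (A : Matrix (Fin m) (Fin n) ℝ) (B : Matrix (Fin n) (Fin p) ℝ)
    (v : EuclideanSpace ℝ (Fin p)) : matCLM (A * B) v = matCLM A (matCLM B v) := by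
  simp [matCLM]

lemma inner_matCLM_transpose (A : Matrix (Fin m) (Fin n) ℝ)
    (u : EuclideanSpace ℝ (Fin m)) (v : EuclideanSpace ℝ (Fin n)) :
    ⟪matCLM Aᵀ u, v⟫ = ⟪u, matCLM A v⟫ := by
  change ⟪toEuclideanLin Aᴴ u, v⟫ = ⟪u, toEuclideanLin A v⟫
  rw [toEuclideanLin_conjTranspose_eq_adjoint, LinearMap.adjoint_inner_left]

lemma inner_normal_eq_of_matCLM {A : Matrix (Fin m) (Fin n) ℝ} {B : Matrix (Fin p) (Fin n) ℝ}
    {μ : ℝ} {f : EuclideanSpace ℝ (Fin m)} {d : EuclideanSpace ℝ (Fin n)}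
    (h : matCLM (Aᵀ * A + μ • (Bᵀ * B)) d = -matCLM Aᵀ f) (w : EuclideanSpace ℝ (Fin n)) :
    ⟪matCLM A d, matCLM A w⟫ + μ * ⟪matCLM B d, matCLM B w⟫ = -⟪f, matCLM A w⟫ := by
  rw [matCLM_add, matCLM_smul, matCLM_mul, matCLM_mul] at h
  rw [← inner_matCLM_transpose, ← inner_matCLM_transpose, ← real_inner_smul_left,
    ← inner_add_left, h, inner_neg_left, inner_matCLM_transpose]

end MatrixMap

section Constants

variable {c1 c2 cF γ nL : ℝ}

lemma lmC3_nonneg (hc2 : 0 < c2) (hγ : 0 < γ) : 0 ≤ lmC3 c1 c2 cF γ nL := by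
  unfold lmC3; positivity

lemma lmC3_sq_mul (hc2 : 0 < c2) (hγ : 0 < γ) :
    lmC3 c1 c2 cF γ nL ^ 2 * (c2 ^ 2 * γ) = c1 ^ 2 + c2 ^ 2 * (nL ^ 2 + cF ^ 2) := by
  unfold lmC3
  rw [mul_pow, Real.sq_sqrt (by positivity), div_pow, mul_pow, Real.sq_sqrt hγ.le]
  field_simp

lemma lmC4_nonneg : 0 ≤ lmC4 c1 cF nL := Real.sqrt_nonneg _

lemma lmC4_sq : lmC4 c1 cF nL ^ 2 = c1 ^ 2 + cF ^ 2 * nL ^ 2 :=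
  Real.sq_sqrt (by positivity)

lemma mul_lmC5 (hc2 : 0 < c2) :
    c2 * lmC5 c1 c2 cF γ nL = c1 * lmC3 c1 c2 cF γ nL ^ 2 + lmC4 c1 cF nL := by
  unfold lmC5; field_simp

lemma lmC5_nonneg (hc1 : 0 ≤ c1) (hc2 : 0 < c2) : 0 ≤ lmC5 c1 c2 cF γ nL := by
  unfold lmC5; exact div_nonneg (add_nonneg (by positivity) lmC4_nonneg) hc2.le

end Constants

section LevenbergMarquardtStep

variable {E V W : Type*} [NormedAddCommGroup E] [InnerProductSpace ℝ E]
  [NormedAddCommGroup V] [InnerProductSpace ℝ V] [NormedAddCommGroup W] [InnerProductSpace ℝ W]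
  {J : E →L[ℝ] V} {L : E →L[ℝ] W} {f : V} {μ : ℝ} {d : E}

/-- The normal equations make `d` a critical point, hence a minimizer, of this convex
function of `e`. -/
theorem merit_le_merit_of_normal_eq (hμ : 0 ≤ μ)
    (hNE : ∀ w, ⟪J d, J w⟫ + μ * ⟪L d, L w⟫ = -⟪f, J w⟫) (e : E) :
    ‖f + J d‖ ^ 2 + μ * ‖L d‖ ^ 2 ≤ ‖f + J e‖ ^ 2 + μ * ‖L e‖ ^ 2 := by
  obtain ⟨u, rfl⟩ : ∃ u, e = d + u := ⟨e - d, by abel⟩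
  have hJ : ‖f + J (d + u)‖ ^ 2 = ‖f + J d‖ ^ 2 + 2 * (⟪f, J u⟫ + ⟪J d, J u⟫) + ‖J u‖ ^ 2 := by
    rw [map_add, ← add_assoc, norm_add_sq_real, inner_add_left]
  have hL : ‖L (d + u)‖ ^ 2 = ‖L d‖ ^ 2 + 2 * ⟪L d, L u⟫ + ‖L u‖ ^ 2 := by
    rw [map_add, norm_add_sq_real]
  rw [hJ, hL]
  nlinarith [hNE u, sq_nonneg ‖J u‖, mul_nonneg hμ (sq_nonneg ‖L u‖)]

theorem norm_apply_le_of_normal_eq (hμ : 0 ≤ μ)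
    (hNE : ∀ w, ⟪J d, J w⟫ + μ * ⟪L d, L w⟫ = -⟪f, J w⟫) : ‖J d‖ ≤ ‖f‖ := by
  have hd := hNE d
  rw [real_inner_self_eq_norm_sq, real_inner_self_eq_norm_sq] at hd
  have hCS : -⟪f, J d⟫ ≤ ‖f‖ * ‖J d‖ := (neg_le_abs _).trans (abs_real_inner_le_norm _ _)
  nlinarith [norm_nonneg (J d), norm_nonneg f, mul_nonneg hμ (sq_nonneg ‖L d‖)]

theorem merit_le_of_normal_eq {e : E} {c1 s : ℝ}
    (hNE : ∀ w, ⟪J d, J w⟫ + ‖f‖ ^ 2 * ⟪L d, L w⟫ = -⟪f, J w⟫)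
    (he : ‖f + J e‖ ≤ c1 * s ^ 2) (hes : ‖e‖ ≤ s) :
    ‖f + J d‖ ^ 2 + ‖f‖ ^ 2 * ‖L d‖ ^ 2 ≤ c1 ^ 2 * s ^ 4 + ‖f‖ ^ 2 * (‖L‖ ^ 2 * s ^ 2) := by
  have hLe : ‖L e‖ ≤ ‖L‖ * s :=
    (L.le_opNorm e).trans (mul_le_mul_of_nonneg_left hes (norm_nonneg L))
  calc ‖f + J d‖ ^ 2 + ‖f‖ ^ 2 * ‖L d‖ ^ 2 ≤ ‖f + J e‖ ^ 2 + ‖f‖ ^ 2 * ‖L e‖ ^ 2 :=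
        merit_le_merit_of_normal_eq (sq_nonneg _) hNE e
    _ ≤ (c1 * s ^ 2) ^ 2 + ‖f‖ ^ 2 * (‖L‖ * s) ^ 2 := by
        gcongr
    _ = c1 ^ 2 * s ^ 4 + ‖f‖ ^ 2 * (‖L‖ ^ 2 * s ^ 2) := by ring

variable {e : E} {c1 c2 cF γ s : ℝ}

theorem norm_le_lmC3_mul_of_normal_eq (hγ : 0 < γ) (hc2 : 0 < c2) (hf : f ≠ 0)
    (hNE : ∀ w, ⟪J d, J w⟫ + ‖f‖ ^ 2 * ⟪L d, L w⟫ = -⟪f, J w⟫)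
    (hcomp : γ * ‖d‖ ^ 2 ≤ ‖J d‖ ^ 2 + ‖L d‖ ^ 2)
    (he : ‖f + J e‖ ≤ c1 * s ^ 2) (hes : ‖e‖ ≤ s) (hlow : c2 * s ≤ ‖f‖) (hup : ‖f‖ ≤ cF * s) :
    ‖d‖ ≤ lmC3 c1 c2 cF γ ‖L‖ * s := by
  have hs : 0 ≤ s := (norm_nonneg e).trans hes
  have hμ : 0 < ‖f‖ ^ 2 := by positivity
  have hmerit := merit_le_of_normal_eq hNE he hes
  have hJd : ‖J d‖ ^ 2 ≤ cF ^ 2 * s ^ 2 := by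
    rw [← mul_pow]
    exact pow_le_pow_left₀ (norm_nonneg _) ((norm_apply_le_of_normal_eq hμ.le hNE).trans hup) 2
  have hμlow : c2 ^ 2 * s ^ 2 ≤ ‖f‖ ^ 2 := by
    rw [← mul_pow]; exact pow_le_pow_left₀ (by positivity) hlow 2
  -- `μ‖L d‖² ≤ c₁²s⁴ + μ‖L‖²s²` and `c₂²s² ≤ μ` give `c₂²‖L d‖² ≤ (c₁² + c₂²‖L‖²) s²`
  have hLd : c2 ^ 2 * ‖L d‖ ^ 2 ≤ (c1 ^ 2 + c2 ^ 2 * ‖L‖ ^ 2) * s ^ 2 := by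
    refine le_of_mul_le_mul_left ?_ hμ
    nlinarith [mul_le_mul_of_nonneg_right hμlow (by positivity : 0 ≤ c1 ^ 2 * s ^ 2),
      sq_nonneg ‖f + J d‖]
  have hd2 : ‖d‖ ^ 2 * (c2 ^ 2 * γ) ≤ (lmC3 c1 c2 cF γ ‖L‖ * s) ^ 2 * (c2 ^ 2 * γ) := by
    rw [mul_pow, mul_right_comm, lmC3_sq_mul hc2 hγ]
    nlinarith [mul_le_mul_of_nonneg_left hcomp (sq_nonneg c2),
      mul_le_mul_of_nonneg_left hJd (sq_nonneg c2)]
  have hc3 : 0 ≤ lmC3 c1 c2 cF γ ‖L‖ * s := mul_nonneg (lmC3_nonneg hc2 hγ) hs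
  exact (pow_le_pow_iff_left₀ (norm_nonneg d) hc3 two_ne_zero).1
    (le_of_mul_le_mul_right hd2 (by positivity))

theorem norm_add_apply_le_lmC4_mul_of_normal_eq
    (hNE : ∀ w, ⟪J d, J w⟫ + ‖f‖ ^ 2 * ⟪L d, L w⟫ = -⟪f, J w⟫)
    (he : ‖f + J e‖ ≤ c1 * s ^ 2) (hes : ‖e‖ ≤ s) (hup : ‖f‖ ≤ cF * s) :
    ‖f + J d‖ ≤ lmC4 c1 cF ‖L‖ * s ^ 2 := by
  have hs : 0 ≤ s := (norm_nonneg e).trans hes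
  have hmerit := merit_le_of_normal_eq hNE he hes
  have hμup : ‖f‖ ^ 2 ≤ cF ^ 2 * s ^ 2 := by
    rw [← mul_pow]; exact pow_le_pow_left₀ (norm_nonneg _) hup 2
  have hsq : ‖f + J d‖ ^ 2 ≤ (lmC4 c1 cF ‖L‖ * s ^ 2) ^ 2 := by
    rw [mul_pow, lmC4_sq]
    nlinarith [mul_le_mul_of_nonneg_right hμup (by positivity : 0 ≤ ‖L‖ ^ 2 * s ^ 2),
      mul_nonneg (sq_nonneg ‖f‖) (sq_nonneg ‖L d‖)]
  exact (pow_le_pow_iff_left₀ (norm_nonneg _) (mul_nonneg lmC4_nonneg (sq_nonneg s))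
    two_ne_zero).1 hsq

end LevenbergMarquardtStep

structure LocalAssumptions {m n : ℕ} (F : EuclideanSpace ℝ (Fin n) → EuclideanSpace ℝ (Fin m))
    (J : EuclideanSpace ℝ (Fin n) → Matrix (Fin m) (Fin n) ℝ)
    (B : Set (EuclideanSpace ℝ (Fin n))) (c1 cF c2 : ℝ) : Prop where
  linearization : ∀ z ∈ B, ∀ y ∈ B, ‖matCLM (J y) (z - y) - (F z - F y)‖ ≤ c1 * ‖z - y‖ ^ 2
  lipschitz : ∀ z ∈ B, ∀ y ∈ B, ‖F z - F y‖ ≤ cF * ‖z - y‖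
  errorBound : ∀ z ∈ B, c2 * infDist z {y | F y = 0} ≤ ‖F z‖

namespace LocalAssumptions

variable {m n p : ℕ} {F : EuclideanSpace ℝ (Fin n) → EuclideanSpace ℝ (Fin m)}
  {J : EuclideanSpace ℝ (Fin n) → Matrix (Fin m) (Fin n) ℝ} {L : Matrix (Fin p) (Fin n) ℝ}
  {xstar x d : EuclideanSpace ℝ (Fin n)} {δ c1 cF c2 γ : ℝ}

theorem exists_step_to_nearest_zero
    (h : LocalAssumptions F J (closedBall xstar (2 * δ)) c1 cF c2)
    (hFcont : Continuous F) (hxstar : F xstar = 0) (hx : dist x xstar ≤ δ) :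
    ∃ e, ‖e‖ = infDist x {y | F y = 0} ∧
      ‖F x + matCLM (J x) e‖ ≤ c1 * infDist x {y | F y = 0} ^ 2 ∧
      ‖F x‖ ≤ cF * infDist x {y | F y = 0} := by
  set s := infDist x {y | F y = 0}
  obtain ⟨xb, hxb, hxbs⟩ : ∃ xb, F xb = 0 ∧ s = dist x xb :=
    (isClosed_eq hFcont continuous_const).exists_infDist_eq_dist ⟨xstar, hxstar⟩ x
  have hsδ : s ≤ δ := (infDist_le_dist_of_mem (s := {y | F y = 0}) hxstar).trans hx
  have hxB : x ∈ closedBall xstar (2 * δ) := by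
    rw [mem_closedBall]; linarith [dist_nonneg (x := x) (y := xstar)]
  have hxbB : xb ∈ closedBall xstar (2 * δ) := by
    rw [mem_closedBall]; linarith [dist_triangle_left xb xstar x, dist_comm x xb]
  have hxbx : ‖xb - x‖ = s := by rw [← dist_eq_norm, dist_comm, ← hxbs]
  refine ⟨xb - x, hxbx, ?_, ?_⟩
  · simpa [hxb, hxbx, add_comm] using h.linearization xb hxbB x hxB
  · simpa [hxb, ← dist_eq_norm, hxbs] using h.lipschitz x hxB xb hxbB

theorem lm_step_bounds (h : LocalAssumptions F J (closedBall xstar (2 * δ)) c1 cF c2)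
    (hFcont : Continuous F) (hxstar : F xstar = 0) (hγ : 0 < γ) (hc1 : 0 ≤ c1) (hc2 : 0 < c2)
    (hcomp : γ * ‖d‖ ^ 2 ≤ ‖matCLM (J x) d‖ ^ 2 + ‖matCLM L d‖ ^ 2)
    (hx : dist x xstar ≤ δ) (hFx : F x ≠ 0)
    (hd : matCLM ((J x)ᵀ * J x + ‖F x‖ ^ 2 • (Lᵀ * L)) d = -matCLM (J x)ᵀ (F x))
    (hδ : lmC3 c1 c2 cF γ ‖matCLM L‖ * infDist x {y | F y = 0} ≤ δ) :
    ‖d‖ ≤ lmC3 c1 c2 cF γ ‖matCLM L‖ * infDist x {y | F y = 0} ∧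
    ‖F (x + d)‖ ≤ lmC5 c1 c2 cF γ ‖matCLM L‖ * infDist x {y | F y = 0} * ‖F x‖ ∧
    infDist (x + d) {y | F y = 0} ≤ lmC5 c1 c2 cF γ ‖matCLM L‖ * infDist x {y | F y = 0} ^ 2 := by
  set s := infDist x {y | F y = 0}
  set c3 := lmC3 c1 c2 cF γ ‖matCLM L‖
  set c5 := lmC5 c1 c2 cF γ ‖matCLM L‖
  obtain ⟨e, hes, he, hup⟩ := h.exists_step_to_nearest_zero hFcont hxstar hx
  have hxB : x ∈ closedBall xstar (2 * δ) := by
    rw [mem_closedBall]; linarith [dist_nonneg (x := x) (y := xstar)]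
  have hNE := inner_normal_eq_of_matCLM hd
  have hlow : c2 * s ≤ ‖F x‖ := h.errorBound x hxB
  have hdle : ‖d‖ ≤ c3 * s :=
    norm_le_lmC3_mul_of_normal_eq hγ hc2 hFx hNE hcomp he hes.le hlow hup
  have hlin := norm_add_apply_le_lmC4_mul_of_normal_eq hNE he hes.le hup
  have hxdB : x + d ∈ closedBall xstar (2 * δ) := by
    rw [mem_closedBall]
    linarith [dist_triangle (x + d) x xstar, dist_self_add_left d x]
  have hFxd : ‖F (x + d)‖ ≤ c2 * c5 * s ^ 2 := by
    have hrem := h.linearization (x + d) hxdB x hxB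
    rw [add_sub_cancel_left] at hrem
    calc ‖F (x + d)‖ = ‖(F x + matCLM (J x) d) - (matCLM (J x) d - (F (x + d) - F x))‖ := by
          congr 1; abel
      _ ≤ ‖F x + matCLM (J x) d‖ + ‖matCLM (J x) d - (F (x + d) - F x)‖ := norm_sub_le _ _
      _ ≤ lmC4 c1 cF ‖matCLM L‖ * s ^ 2 + c1 * (c3 * s) ^ 2 := by
          gcongr
          exact hrem.trans (by gcongr)
      _ = c2 * c5 * s ^ 2 := by rw [mul_lmC5 hc2]; ring
  have hc5s : 0 ≤ c5 * s := mul_nonneg (lmC5_nonneg hc1 hc2) infDist_nonneg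
  refine ⟨hdle, ?_, le_of_mul_le_mul_left ?_ hc2⟩
  · nlinarith [mul_le_mul_of_nonneg_left hlow hc5s]
  · linarith [h.errorBound _ hxdB]

theorem full_step_accepted (h : LocalAssumptions F J (closedBall xstar (2 * δ)) c1 cF c2)
    (hFcont : Continuous F) (hxstar : F xstar = 0) (hγ : 0 < γ) (hc1 : 0 ≤ c1) (hc2 : 0 < c2)
    (hcomp : γ * ‖d‖ ^ 2 ≤ ‖matCLM (J x) d‖ ^ 2 + ‖matCLM L d‖ ^ 2)
    (hx : dist x xstar ≤ δ) (hFx : F x ≠ 0)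
    (hd : matCLM ((J x)ᵀ * J x + ‖F x‖ ^ 2 • (Lᵀ * L)) d = -matCLM (J x)ᵀ (F x))
    {ϑ α : ℝ} {x' : EuclideanSpace ℝ (Fin n)} (hα : ‖F (x + d)‖ ≤ ϑ * ‖F x‖ → α = 1)
    (hx' : x' = x + α • d)
    (hδ : lmC3 c1 c2 cF γ ‖matCLM L‖ * infDist x {y | F y = 0} ≤ δ)
    (hϑ : lmC5 c1 c2 cF γ ‖matCLM L‖ * infDist x {y | F y = 0} ≤ ϑ) :
    α = 1 ∧ ‖F x'‖ ≤ ϑ * ‖F x‖ ∧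
    dist x' x ≤ lmC3 c1 c2 cF γ ‖matCLM L‖ * infDist x {y | F y = 0} ∧
    infDist x' {y | F y = 0} ≤ lmC5 c1 c2 cF γ ‖matCLM L‖ * infDist x {y | F y = 0} ^ 2 := by
  obtain ⟨hdle, hFxd, hdist⟩ := h.lm_step_bounds hFcont hxstar hγ hc1 hc2 hcomp hx hFx hd hδ
  have hacc : ‖F (x + d)‖ ≤ ϑ * ‖F x‖ := hFxd.trans (mul_le_mul_of_nonneg_right hϑ (norm_nonneg _))
  rw [hx', hα hacc, one_smul, dist_self_add_left]
  exact ⟨rfl, hacc, hdle, hdist⟩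

end LocalAssumptions

theorem exists_pos_mul_le_and_mul_le (a b : ℝ) {r t : ℝ} (hr : 0 < r) (ht : 0 < t) :
    ∃ ε > 0, a * ε ≤ r ∧ b * ε ≤ t := by
  have hlim (c : ℝ) : Tendsto (fun ε => c * ε) (𝓝[>] 0) (𝓝 0) :=
    ((continuous_const_mul c).tendsto' 0 0 (mul_zero c)).mono_left nhdsWithin_le_nhds
  obtain ⟨ε, ⟨ha, hb⟩, hε⟩ :=
    (((hlim a).eventually_le_const hr).and ((hlim b).eventually_le_const ht)).and
      self_mem_nhdsWithin |>.exists
  exact ⟨ε, hε, ha, hb⟩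

/-- Once `sₖ ≤ ε`, `s` at least halves at every step, so the steps add up to at most `2aε`
and the sequence never leaves the ball of radius `(1 + 2a)ε ≤ R`. -/
theorem dist_le_and_tendsto_zero_of_quadratic_step {X : Type*} [PseudoMetricSpace X]
    {y : ℕ → X} {s : ℕ → ℝ} {x₀ : X} {k₀ : ℕ} {a C ε R : ℝ} (ha : 0 ≤ a) (hC : 0 ≤ C)
    (hR : (1 + 2 * a) * ε ≤ R) (hCε : C * ε ≤ 1 / 2) (hs : ∀ k, 0 ≤ s k)
    (hy₀ : dist (y k₀) x₀ ≤ ε) (hs₀ : s k₀ ≤ ε)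
    (hstep : ∀ k ≥ k₀, dist (y k) x₀ ≤ R → s k ≤ ε →
      dist (y (k + 1)) (y k) ≤ a * s k ∧ s (k + 1) ≤ C * s k ^ 2) :
    (∀ k ≥ k₀, dist (y k) x₀ ≤ R ∧ s k ≤ ε) ∧ Tendsto s atTop (𝓝 0) := by
  have hε : 0 ≤ ε := dist_nonneg.trans hy₀
  have hball {q : ℝ} (hq : 0 ≤ q) : ε + 2 * a * ε * (1 - q) ≤ R := by
    nlinarith [mul_nonneg (mul_nonneg ha hε) hq]
  have hq1 (k : ℕ) : ((1 : ℝ) / 2) ^ k ≤ 1 := pow_le_one₀ (by norm_num) (by norm_num)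
  have key : ∀ k ≥ k₀,
      dist (y k) x₀ ≤ ε + 2 * a * ε * (1 - (1 / 2) ^ (k - k₀)) ∧ s k ≤ ε * (1 / 2) ^ (k - k₀) := by
    refine Nat.le_induction (by simpa using ⟨hy₀, hs₀⟩) fun k hk ih => ?_
    have hsk : s k ≤ ε := ih.2.trans (mul_le_of_le_one_right hε (hq1 _))
    obtain ⟨hdist, hsq⟩ := hstep k hk (ih.1.trans (hball (by positivity))) hsk
    have hhalf : s (k + 1) ≤ s k / 2 := by
      have hCs : C * s k ≤ 1 / 2 := (mul_le_mul_of_nonneg_left hsk hC).trans hCε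
      nlinarith [mul_le_mul_of_nonneg_right hCs (hs k)]
    rw [Nat.sub_add_comm hk, pow_succ]
    constructor
    · calc dist (y (k + 1)) x₀ ≤ dist (y (k + 1)) (y k) + dist (y k) x₀ := dist_triangle _ _ _
        _ ≤ a * (ε * (1 / 2) ^ (k - k₀)) + (ε + 2 * a * ε * (1 - (1 / 2) ^ (k - k₀))) :=
            add_le_add (hdist.trans (mul_le_mul_of_nonneg_left ih.2 ha)) ih.1
        _ = ε + 2 * a * ε * (1 - (1 / 2) ^ (k - k₀) * (1 / 2)) := by ring
    · linarith [ih.2]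
  refine ⟨fun k hk => ⟨(key k hk).1.trans (hball (by positivity)),
    (key k hk).2.trans (mul_le_of_le_one_right hε (hq1 _))⟩, ?_⟩
  have hgeom : Tendsto (fun k => ε * (1 / 2 : ℝ) ^ (k - k₀)) atTop (𝓝 0) := by
    simpa using ((tendsto_pow_atTop_nhds_zero_of_lt_one (r := (1 / 2 : ℝ)) (by norm_num)
      (by norm_num)).comp (tendsto_sub_atTop_nat k₀)).const_mul ε
  exact squeeze_zero' (.of_forall hs) (eventually_atTop.2 ⟨k₀, fun k hk => (key k hk).2⟩) hgeom

theorem lmmss_linesearch_local_quadratic_convergence_general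
    (n m p : ℕ)
    (F : EuclideanSpace ℝ (Fin n) → EuclideanSpace ℝ (Fin m))
    (J : EuclideanSpace ℝ (Fin n) → Matrix (Fin m) (Fin n) ℝ)
    (hdiff : ∀ x, HasFDerivAt F (matCLM (J x)) x)
    (L : Matrix (Fin p) (Fin n) ℝ) (γ : ℝ) (hγ : 0 < γ)
    (hcomp : ∀ (x : EuclideanSpace ℝ (Fin n)) (v : EuclideanSpace ℝ (Fin n)),
      ‖matCLM (J x) v‖ ^ 2 + ‖matCLM L v‖ ^ 2 ≥ γ * ‖v‖ ^ 2)
    (ν η ϑ : ℝ)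
    (hϑ : ϑ ∈ Set.Ioo (0 : ℝ) 1)
    (x d : ℕ → EuclideanSpace ℝ (Fin n)) (α : ℕ → ℝ)
    (hFk : ∀ k, F (x k) ≠ 0)
    (hd : ∀ k,
      matCLM ((J (x k))ᵀ * J (x k) + ‖F (x k)‖ ^ 2 • (Lᵀ * L)) (d k) =
        -(matCLM (J (x k))ᵀ (F (x k))))
    (hα : ∀ k,
      (‖F (x k + d k)‖ ≤ ϑ * ‖F (x k)‖ ∧ α k = 1) ∨
      (¬ (‖F (x k + d k)‖ ≤ ϑ * ‖F (x k)‖) ∧ ∃ mk : ℕ, α k = η ^ mk ∧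
        ((1 : ℝ) / 2) * ‖F (x k + η ^ mk • d k)‖ ^ 2 - ((1 : ℝ) / 2) * ‖F (x k)‖ ^ 2 ≤
          ν * η ^ mk * ⟪matCLM (J (x k))ᵀ (F (x k)), d k⟫ ∧
        ∀ m' : ℕ, m' < mk →
          ¬ (((1 : ℝ) / 2) * ‖F (x k + η ^ m' • d k)‖ ^ 2 - ((1 : ℝ) / 2) * ‖F (x k)‖ ^ 2 ≤
            ν * η ^ m' * ⟪matCLM (J (x k))ᵀ (F (x k)), d k⟫)))
    (hstep : ∀ k, x (k + 1) = x k + α k • d k)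
    (xstar : EuclideanSpace ℝ (Fin n))
    (hlimit : ∃ K : ℕ → ℕ, StrictMono K ∧ Tendsto (fun k => x (K k)) atTop (nhds xstar))
    (hxstar : F xstar = 0)
    (δ : ℝ) (hδ0 : 0 < δ)
    (c1 : ℝ) (hc1pos : 0 < c1)
    (hc1 : ∀ z ∈ closedBall xstar (2 * δ), ∀ y ∈ closedBall xstar (2 * δ),
      ‖matCLM (J y) (z - y) - (F z - F y)‖ ≤ c1 * ‖z - y‖ ^ 2)
    (cF : ℝ)
    (hcF : ∀ z ∈ closedBall xstar (2 * δ), ∀ y ∈ closedBall xstar (2 * δ),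
      ‖F z - F y‖ ≤ cF * ‖z - y‖)
    (c2 : ℝ) (hc2pos : 0 < c2)
    (hc2 : ∀ z ∈ closedBall xstar (2 * δ),
      c2 * infDist z {y | F y = 0} ≤ ‖F z‖) :
    ∃ k0 : ℕ,
      (∀ k ≥ k0, α k = 1 ∧ ‖F (x (k + 1))‖ ≤ ϑ * ‖F (x k)‖) ∧
      (∀ k ≥ k0, infDist (x (k + 1)) {y | F y = 0} ≤
        lmC5 c1 c2 cF γ ‖matCLM L‖ * infDist (x k) {y | F y = 0} ^ 2) ∧
      Tendsto (fun k => infDist (x k) {y | F y = 0}) atTop (nhds 0) := by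
  have hFcont : Continuous F := continuous_iff_continuousAt.2 fun z => (hdiff z).continuousAt
  have hloc : LocalAssumptions F J (closedBall xstar (2 * δ)) c1 cF c2 := ⟨hc1, hcF, hc2⟩
  set s := fun k => infDist (x k) {y | F y = 0}
  set c3 := lmC3 c1 c2 cF γ ‖matCLM L‖
  set c5 := lmC5 c1 c2 cF γ ‖matCLM L‖
  have hc3 : 0 ≤ c3 := lmC3_nonneg hc2pos hγ
  have hc5 : 0 ≤ c5 := lmC5_nonneg hc1pos.le hc2pos
  obtain ⟨ε, hε, hεδ, hεϑ⟩ :=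
    exists_pos_mul_le_and_mul_le (1 + 2 * c3) c5 hδ0 (lt_min hϑ.1 one_half_pos)
  obtain ⟨K, -, hK⟩ := hlimit
  obtain ⟨k0, hk0⟩ := (hK.eventually (closedBall_mem_nhds xstar hε)).exists
  have hfull : ∀ k, dist (x k) xstar ≤ δ → s k ≤ ε →
      α k = 1 ∧ ‖F (x (k + 1))‖ ≤ ϑ * ‖F (x k)‖ ∧ dist (x (k + 1)) (x k) ≤ c3 * s k ∧
        s (k + 1) ≤ c5 * s k ^ 2 := fun k hxk hsk =>
    hloc.full_step_accepted hFcont hxstar hγ hc1pos.le hc2pos (hcomp (x k) (d k)) hxk (hFk k)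
      (hd k) (fun hacc => (hα k).elim And.right fun h => absurd hacc h.1) (hstep k)
      (by nlinarith [mul_le_mul_of_nonneg_left hsk hc3])
      ((mul_le_mul_of_nonneg_left hsk hc5).trans (hεϑ.trans (min_le_left _ _)))
  obtain ⟨hnear, hlim⟩ := dist_le_and_tendsto_zero_of_quadratic_step (y := x) (s := s) hc3 hc5
    hεδ (hεϑ.trans (min_le_right _ _)) (fun k => infDist_nonneg) hk0
    ((infDist_le_dist_of_mem (s := {y | F y = 0}) hxstar).trans hk0)
    fun k _ hxk hsk => (hfull k hxk hsk).2.2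
  have hfull_of_ge (k : ℕ) (hk : k ≥ K k0) := hfull k (hnear k hk).1 (hnear k hk).2
  exact ⟨K k0, fun k hk => ⟨(hfull_of_ge k hk).1, (hfull_of_ge k hk).2.1⟩,
    fun k hk => (hfull_of_ge k hk).2.2.2, hlim⟩

/-- if a limit point `x*` of the LMMSS line-search sequence satisfies
`F(x*) = 0` and the local assumptions hold at `x*`, then eventually the full step `α_k = 1`
is taken with `‖F(x_{k+1})‖ ≤ ϑ‖F(x_k)‖`, and `dist(x_k, X*) → 0` quadratically. -/
theorem lmmss_linesearch_local_quadratic_convergence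
    (n m p : ℕ)
    (F : EuclideanSpace ℝ (Fin n) → EuclideanSpace ℝ (Fin m))
    (J : EuclideanSpace ℝ (Fin n) → Matrix (Fin m) (Fin n) ℝ)
    (hdiff : ∀ x, HasFDerivAt F (matCLM (J x)) x)
    (hJcont : Continuous J)
    (L : Matrix (Fin p) (Fin n) ℝ) (γ : ℝ) (hγ : 0 < γ)
    (hcomp : ∀ (x : EuclideanSpace ℝ (Fin n)) (v : EuclideanSpace ℝ (Fin n)),
      ‖matCLM (J x) v‖ ^ 2 + ‖matCLM L v‖ ^ 2 ≥ γ * ‖v‖ ^ 2)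
    (ν η ϑ : ℝ) (hν : ν ∈ Set.Ioo (0 : ℝ) 1) (hη : η ∈ Set.Ioo (0 : ℝ) 1)
    (hϑ : ϑ ∈ Set.Ioo (0 : ℝ) 1)
    (x d : ℕ → EuclideanSpace ℝ (Fin n)) (α : ℕ → ℝ)
    (hFk : ∀ k, F (x k) ≠ 0)
    (hd : ∀ k,
      matCLM ((J (x k))ᵀ * J (x k) + ‖F (x k)‖ ^ 2 • (Lᵀ * L)) (d k) =
        -(matCLM (J (x k))ᵀ (F (x k))))
    (hα : ∀ k,
      (‖F (x k + d k)‖ ≤ ϑ * ‖F (x k)‖ ∧ α k = 1) ∨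
      (¬ (‖F (x k + d k)‖ ≤ ϑ * ‖F (x k)‖) ∧ ∃ mk : ℕ, α k = η ^ mk ∧
        ((1 : ℝ) / 2) * ‖F (x k + η ^ mk • d k)‖ ^ 2 - ((1 : ℝ) / 2) * ‖F (x k)‖ ^ 2 ≤
          ν * η ^ mk * ⟪matCLM (J (x k))ᵀ (F (x k)), d k⟫ ∧
        ∀ m' : ℕ, m' < mk →
          ¬ (((1 : ℝ) / 2) * ‖F (x k + η ^ m' • d k)‖ ^ 2 - ((1 : ℝ) / 2) * ‖F (x k)‖ ^ 2 ≤
            ν * η ^ m' * ⟪matCLM (J (x k))ᵀ (F (x k)), d k⟫)))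
    (hstep : ∀ k, x (k + 1) = x k + α k • d k)
    (xstar : EuclideanSpace ℝ (Fin n))
    (hlimit : ∃ K : ℕ → ℕ, StrictMono K ∧ Tendsto (fun k => x (K k)) atTop (nhds xstar))
    (hxstar : F xstar = 0)
    (δ : ℝ) (hδ0 : 0 < δ) (hδh : δ < 1 / 2)
    (c1 : ℝ) (hc1pos : 0 < c1)
    (hc1 : ∀ z ∈ closedBall xstar (2 * δ), ∀ y ∈ closedBall xstar (2 * δ),
      ‖matCLM (J y) (z - y) - (F z - F y)‖ ≤ c1 * ‖z - y‖ ^ 2)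
    (cF : ℝ) (hcFpos : 0 < cF)
    (hcF : ∀ z ∈ closedBall xstar (2 * δ), ∀ y ∈ closedBall xstar (2 * δ),
      ‖F z - F y‖ ≤ cF * ‖z - y‖)
    (c2 : ℝ) (hc2pos : 0 < c2)
    (hc2 : ∀ z ∈ closedBall xstar (2 * δ),
      c2 * infDist z {y | F y = 0} ≤ ‖F z‖) :
    ∃ k0 : ℕ,
      (∀ k ≥ k0, α k = 1 ∧ ‖F (x (k + 1))‖ ≤ ϑ * ‖F (x k)‖) ∧
      (∀ k ≥ k0, infDist (x (k + 1)) {y | F y = 0} ≤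
        lmC5 c1 c2 cF γ ‖matCLM L‖ * infDist (x k) {y | F y = 0} ^ 2) ∧
      Tendsto (fun k => infDist (x k) {y | F y = 0}) atTop (nhds 0) :=
  lmmss_linesearch_local_quadratic_convergence_general n m p F J hdiff L γ hγ hcomp ν η ϑ hϑ x d α
    hFk hd hα hstep xstar hlimit hxstar δ hδ0 c1 hc1pos hc1 cF hcF c2 hc2pos hc2
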